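/- arXiv:1408.1661 — 2 statements merged into one kernel-verified Lean document; each statement's English description precedes it below -/
import Mathlib

section
/- Let λ, μ ∈ ℝ with |λ| > |μ| > 1 and |λ| > √2, and let ψ : ℝ → ℝ be a C¹ function with M := sup|ψ'| < ∞. Given a > 0 and λ' with √2 ≤ λ' < |λ|, there exist a₀ ∈ (0,a) and δ₀ > 0 such that for every C¹ function φ : ℝ → ℝ with sup|φ| ≤ δ₀ and |μ − ψ(x)φ'(y)| ≤ |μ| for all x,y ∈ ℝ, the C¹ map F : ℝ² → ℝ² defined by F(x,y) = (λx, μy − ψ(x)φ(y)) satisfies: (i) DF_p maps cl(C^u_{a₀}) ∖ {(0,0)} into C^u_{a₀} for every p ∈ ℝ²; (ii) |DF_p(v)| ≥ λ'|v| for every v ∈ C^u_{a₀} and every p ∈ ℝ²; (iii) for every C¹ curve γ with γ'(t) ∈ C^u_{a₀} for all t, diam(F∘γ) ≥ λ'·diam(γ). -/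
noncomputable section

/-- The Euclidean plane `ℝ²`. -/
abbrev E2 : Type := EuclideanSpace ℝ (Fin 2)

/-- The unstable cone of aperture `a` in `ℝ²`: `{(v₁,v₂) : |v₂| < a|v₁|}`. -/
def coneUE (a : ℝ) : Set E2 := {v | |v 1| < a * |v 0|}

/-- The map `F(x,y) = (λx, μy − ψ(x)φ(y))`. -/
def Fmap (lam mu : ℝ) (ψ φ : ℝ → ℝ) : E2 → E2 :=
  fun v => WithLp.toLp 2 ![lam * v 0, mu * v 1 - ψ (v 0) * φ (v 1)]

/-!
The derivative of `F` is lower triangular, `DF_p = [[λ, 0], [-ψ'(x)φ(y), μ - ψ(x)φ'(y)]]`, and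
its off-diagonal entry is at most `M δ₀`. For `|w₂| ≤ a₀|w₁|`, `w ≠ 0`, the second coordinate of
`DF_p w` is thus at most `(M δ₀ + |μ| a₀)|w₁|`, which is `< a₀|λ w₁|` once `δ₀` is small because
`|λ| > |μ|`. Expansion comes from `‖w‖ ≤ √(1 + a₀²)|w₁|` on the closed cone, `‖DF_p w‖ ≥ |λ w₁|`,
and `λ'√(1 + a₀²) < |λ|` for small `a₀`. For a curve tangent to the open cone, Cauchy's mean value
theorem puts every chord `γ(u) - γ(s)` in the closed cone, and the first coordinate of
`F(γ(u)) - F(γ(s))` is `λ` times that of the chord, so the same estimate holds for all chords and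
hence for diameters.
-/

open Set Metric Filter Topology

def closedConeUE (a : ℝ) : Set E2 := {v | |v 1| ≤ a * |v 0|}

section Cones

variable {a : ℝ}

lemma coneUE_subset_closedConeUE : coneUE a ⊆ closedConeUE a :=
  fun _ hv => le_of_lt (α := ℝ) hv

lemma closure_coneUE_subset : closure (coneUE a) ⊆ closedConeUE a :=
  closure_minimal coneUE_subset_closedConeUE (isClosed_le (by fun_prop) (by fun_prop))

lemma neg_mem_closedConeUE {v : E2} (hv : v ∈ closedConeUE a) : -v ∈ closedConeUE a := by
  simpa [closedConeUE] using hv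

lemma norm_le_of_mem_closedConeUE {w : E2} (hw : w ∈ closedConeUE a) :
    ‖w‖ ≤ √(1 + a ^ 2) * |w 0| := by
  have hw1 : w 1 ^ 2 ≤ (a * |w 0|) ^ 2 := by
    rw [← sq_abs (w 1)]
    exact pow_le_pow_left₀ (abs_nonneg _) hw 2
  rw [← Real.sqrt_sq (abs_nonneg (w 0)), ← Real.sqrt_mul (by positivity),
    ← Real.sqrt_sq (norm_nonneg w)]
  apply Real.sqrt_le_sqrt
  rw [EuclideanSpace.real_norm_sq_eq, Fin.sum_univ_two, sq_abs]
  rw [mul_pow, sq_abs] at hw1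
  linarith

lemma mul_norm_le_norm_of_mem_closedConeUE {lam lam' : ℝ} (hlam' : 0 ≤ lam')
    (hlam : lam' * √(1 + a ^ 2) ≤ |lam|) {w v : E2} (hw : w ∈ closedConeUE a)
    (hv : v 0 = lam * w 0) : lam' * ‖w‖ ≤ ‖v‖ :=
  calc lam' * ‖w‖ ≤ lam' * (√(1 + a ^ 2) * |w 0|) := by
        gcongr; exact norm_le_of_mem_closedConeUE hw
    _ ≤ |lam| * |w 0| := by rw [← mul_assoc]; gcongr
    _ = ‖v 0‖ := by rw [hv, Real.norm_eq_abs, abs_mul]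
    _ ≤ ‖v‖ := PiLp.norm_apply_le v 0

lemma mem_coneUE_of_lower_triangular {lam b c : ℝ} (h : |b| + |c| * a < a * |lam|)
    {w v : E2} (hw : w ∈ closedConeUE a) (hw0 : w ≠ 0)
    (hv0 : v 0 = lam * w 0) (hv1 : v 1 = b * w 0 + c * w 1) : v ∈ coneUE a := by
  have hw0' : 0 < |w 0| := by
    refine abs_pos.2 fun h0 => hw0 ?_
    have h1 : w 1 = 0 := by simpa [closedConeUE, h0] using hw
    ext i; fin_cases i <;> simp [h0, h1]
  show |v 1| < a * |v 0|
  calc |v 1| ≤ |b| * |w 0| + |c| * |w 1| := by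
        rw [hv1, ← abs_mul, ← abs_mul]; exact abs_add_le _ _
    _ ≤ |b| * |w 0| + |c| * (a * |w 0|) := by gcongr; exact hw
    _ = (|b| + |c| * a) * |w 0| := by ring
    _ < a * |lam| * |w 0| := by gcongr
    _ = a * |v 0| := by rw [hv0, abs_mul, mul_assoc]

end Cones

-- Cauchy's mean value theorem applied to the two coordinates of `γ` on `[s, u]`.
lemma sub_mem_closedConeUE_of_derivWithin_mem_coneUE {a α β : ℝ} {γ : ℝ → E2}
    (hγ : DifferentiableOn ℝ γ (Icc α β))
    (hγ' : ∀ t ∈ Icc α β, derivWithin γ (Icc α β) t ∈ coneUE a)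
    {s u : ℝ} (hs : s ∈ Icc α β) (hu : u ∈ Icc α β) : γ u - γ s ∈ closedConeUE a := by
  wlog hsu : s ≤ u generalizing s u
  · simpa using neg_mem_closedConeUE (this hu hs (le_of_not_ge hsu))
  rcases hsu.eq_or_lt with rfl | hsu
  · simp [closedConeUE]
  have hsub : Icc s u ⊆ Icc α β := Icc_subset_Icc hs.1 hu.2
  have hderiv (i : Fin 2) (t : ℝ) (ht : t ∈ Ioo s u) :
      HasDerivAt (fun r => γ r i) (derivWithin γ (Icc α β) t i) t := by
    have hnhds : Icc α β ∈ 𝓝 t := Icc_mem_nhds (hs.1.trans_lt ht.1) (ht.2.trans_le hu.2)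
    have hγt := ((hγ t (hsub (Ioo_subset_Icc_self ht))).differentiableAt hnhds).hasDerivAt
    rw [derivWithin_of_mem_nhds hnhds]
    exact (PiLp.hasFDerivAt_apply (𝕜 := ℝ) 2 (γ t) i).comp_hasDerivAt t hγt
  have hcont (i : Fin 2) : ContinuousOn (fun r => γ r i) (Icc s u) :=
    (PiLp.continuous_apply 2 _ i).comp_continuousOn (hγ.continuousOn.mono hsub)
  obtain ⟨t, ht, hslope⟩ := exists_ratio_hasDerivAt_eq_ratio_slope _ _ hsu (hcont 0) (hderiv 0)
    _ _ (hcont 1) (hderiv 1)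
  have hcone := hγ' t (hsub (Ioo_subset_Icc_self ht))
  set d := derivWithin γ (Icc α β) t
  have hd0 : 0 < |d 0| := by
    refine abs_pos.2 fun h0 => (abs_nonneg (d 1)).not_gt ?_
    simpa [coneUE, h0] using hcone
  show |(γ u - γ s) 1| ≤ a * |(γ u - γ s) 0|
  refine le_of_mul_le_mul_right ?_ hd0
  calc |(γ u - γ s) 1| * |d 0| = |γ u 0 - γ s 0| * |d 1| := by
        simp only [PiLp.sub_apply, ← abs_mul, hslope]
    _ ≤ |γ u 0 - γ s 0| * (a * |d 0|) := by gcongr; exact hcone.le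
    _ = a * |(γ u - γ s) 0| * |d 0| := by simp only [PiLp.sub_apply]; ring

lemma mul_diam_le_diam_image {X Y : Type*} [PseudoMetricSpace X] [PseudoMetricSpace Y]
    {f : X → Y} {s : Set X} {K : ℝ} (hf : Bornology.IsBounded (f '' s))
    (h : ∀ x ∈ s, ∀ y ∈ s, K * dist x y ≤ dist (f x) (f y)) : K * diam s ≤ diam (f '' s) := by
  rcases le_or_gt K 0 with hK | hK
  · exact (mul_nonpos_of_nonpos_of_nonneg hK diam_nonneg).trans diam_nonneg
  rw [mul_comm, ← le_div_iff₀ hK]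
  refine diam_le_of_forall_dist_le (by positivity) fun x hx y hy => (le_div_iff₀ hK).2 ?_
  rw [mul_comm]
  exact (h x hx y hy).trans (dist_le_diam_of_mem hf (mem_image_of_mem f hx) (mem_image_of_mem f hy))

lemma mul_diam_le_diam_image_of_derivWithin_mem_coneUE {a lam lam' α β : ℝ} {f : E2 → E2}
    {γ : ℝ → E2} (hf : Continuous f) (hf0 : ∀ x, f x 0 = lam * x 0) (hlam' : 0 ≤ lam')
    (hlam : lam' * √(1 + a ^ 2) ≤ |lam|) (hγ : DifferentiableOn ℝ γ (Icc α β))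
    (hγ' : ∀ t ∈ Icc α β, derivWithin γ (Icc α β) t ∈ coneUE a) :
    lam' * diam (γ '' Icc α β) ≤ diam (f '' (γ '' Icc α β)) := by
  refine mul_diam_le_diam_image
    ((isCompact_Icc.image_of_continuousOn hγ.continuousOn).image hf).isBounded ?_
  rintro _ ⟨s, hs, rfl⟩ _ ⟨u, hu, rfl⟩
  rw [dist_eq_norm, dist_eq_norm]
  refine mul_norm_le_norm_of_mem_closedConeUE hlam' hlam
    (sub_mem_closedConeUE_of_derivWithin_mem_coneUE hγ hγ' hu hs) ?_
  simp only [PiLp.sub_apply, hf0, mul_sub]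

section Calculus

variable {lam mu : ℝ} {ψ φ : ℝ → ℝ}

lemma Fmap_apply_zero (v : E2) : Fmap lam mu ψ φ v 0 = lam * v 0 := rfl

lemma differentiable_Fmap (hψ : Differentiable ℝ ψ) (hφ : Differentiable ℝ φ) :
    Differentiable ℝ (Fmap lam mu ψ φ) := by
  rw [differentiable_euclidean]
  intro i
  fin_cases i <;>
    simp only [Fmap, Fin.zero_eta, Fin.mk_one, Matrix.cons_val_zero, Matrix.cons_val_one,
      Matrix.cons_val_fin_one] <;>
    fun_prop

lemma fderiv_Fmap_apply (hψ : Differentiable ℝ ψ) (hφ : Differentiable ℝ φ) (p w : E2) :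
    fderiv ℝ (Fmap lam mu ψ φ) p w = WithLp.toLp 2 ![lam * w 0,
      -(deriv ψ (p 0) * φ (p 1)) * w 0 + (mu - ψ (p 0) * deriv φ (p 1)) * w 1] := by
  set F := Fmap lam mu ψ φ
  have hF := (differentiable_Fmap (lam := lam) (mu := mu) hψ hφ p).hasFDerivAt
  have hcoord (i : Fin 2) : HasFDerivAt (fun v => F v i)
      (PiLp.proj 2 (fun _ => ℝ) i ∘L fderiv ℝ F p) p :=
    (PiLp.hasFDerivAt_apply (𝕜 := ℝ) 2 (F p) i).comp p hF
  have hx : HasFDerivAt (fun v : E2 => v 0) (PiLp.proj 2 (fun _ => ℝ) 0) p :=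
    PiLp.hasFDerivAt_apply (𝕜 := ℝ) 2 p 0
  have hy : HasFDerivAt (fun v : E2 => v 1) (PiLp.proj 2 (fun _ => ℝ) 1) p :=
    PiLp.hasFDerivAt_apply (𝕜 := ℝ) 2 p 1
  have h0 := (hcoord 0).unique (hx.const_mul lam)
  have h1 := (hcoord 1).unique ((hy.const_mul mu).sub
    (((hψ (p 0)).hasDerivAt.comp_hasFDerivAt p hx).mul
      ((hφ (p 1)).hasDerivAt.comp_hasFDerivAt p hy)))
  ext i
  fin_cases i
  · simpa using congrArg (· w) h0
  · have h := congrArg (· w) h1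
    simp only [ContinuousLinearMap.comp_apply, PiLp.proj_apply, Function.comp_apply,
      sub_apply, smul_apply, smul_eq_mul, add_apply] at h
    simp only [Fin.mk_one, h, Matrix.cons_val_one, Matrix.cons_val_fin_one]
    ring

end Calculus

lemma exists_mem_Ioo_mul_sqrt_one_add_sq_lt {c d a : ℝ} (hcd : c < d) (ha : 0 < a) :
    ∃ b ∈ Ioo 0 a, c * √(1 + b ^ 2) < d := by
  have hlim : Tendsto (fun b : ℝ => c * √(1 + b ^ 2)) (𝓝[>] 0) (𝓝 c) := by
    have : Continuous fun b : ℝ => c * √(1 + b ^ 2) := by fun_prop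
    simpa using (this.tendsto 0).mono_left nhdsWithin_le_nhds
  exact (Filter.Eventually.and (Ioo_mem_nhdsGT ha) (hlim.eventually (gt_mem_nhds hcd))).exists

theorem unstable_cones_expanding_general
    (lam mu : ℝ) (hlm : |lam| > |mu|)
    (ψ : ℝ → ℝ) (hψ : ContDiff ℝ 1 ψ) (M : ℝ) (hM : ∀ x, |deriv ψ x| ≤ M)
    (a : ℝ) (ha : 0 < a) (lam' : ℝ) (hl1 : Real.sqrt 2 ≤ lam') (hl2 : lam' < |lam|) :
    ∃ a₀ ∈ Set.Ioo (0:ℝ) a, ∃ δ₀ > (0:ℝ),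
      ∀ φ : ℝ → ℝ, ContDiff ℝ 1 φ → (∀ y, |φ y| ≤ δ₀) →
        (∀ x y, |mu - ψ x * deriv φ y| ≤ |mu|) →
        -- (i) invariance of the closed cone minus the origin
        (∀ p : E2, ∀ w ∈ closure (coneUE a₀) \ {0},
            fderiv ℝ (Fmap lam mu ψ φ) p w ∈ coneUE a₀) ∧
        -- (ii) uniform expansion of cone vectors
        (∀ p : E2, ∀ w ∈ coneUE a₀,
            lam' * ‖w‖ ≤ ‖fderiv ℝ (Fmap lam mu ψ φ) p w‖) ∧
        -- (iii) expansion of the diameter of cone-tangent curves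
        (∀ (γ : ℝ → E2) (α β : ℝ), α ≤ β → ContDiffOn ℝ 1 γ (Set.Icc α β) →
            (∀ t ∈ Set.Icc α β, derivWithin γ (Set.Icc α β) t ∈ coneUE a₀) →
            lam' * Metric.diam (γ '' Set.Icc α β) ≤
              Metric.diam (Fmap lam mu ψ φ '' (γ '' Set.Icc α β))) := by
  have hlam' : 0 ≤ lam' := (Real.sqrt_nonneg 2).trans hl1
  obtain ⟨a₀, ⟨ha₀, ha₀a⟩, hexp⟩ := exists_mem_Ioo_mul_sqrt_one_add_sq_lt hl2 ha
  have hM1 : 0 < M + 1 := by linarith [(abs_nonneg _).trans (hM 0)]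
  set δ₀ := a₀ * (|lam| - |mu|) / (M + 1)
  have hMδ : M * δ₀ < a₀ * (|lam| - |mu|) := by
    rw [mul_div_assoc', div_lt_iff₀ hM1]
    linarith [mul_pos ha₀ (sub_pos.2 hlm)]
  refine ⟨a₀, ⟨ha₀, ha₀a⟩, δ₀, by positivity, fun φ hφ hφδ hφμ => ?_⟩
  have hψd := hψ.differentiable one_ne_zero
  have hφd := hφ.differentiable one_ne_zero
  have hDF := fderiv_Fmap_apply (lam := lam) (mu := mu) hψd hφd
  have hentries (p : E2) : |-(deriv ψ (p 0) * φ (p 1))| + |mu - ψ (p 0) * deriv φ (p 1)| * a₀ <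
      a₀ * |lam| :=
    calc _ ≤ M * δ₀ + |mu| * a₀ := by
          rw [abs_neg, abs_mul]
          exact add_le_add (mul_le_mul (hM _) (hφδ _) (abs_nonneg _) ((abs_nonneg _).trans (hM 0)))
            (mul_le_mul_of_nonneg_right (hφμ _ _) ha₀.le)
      _ < a₀ * |lam| := by linarith
  refine ⟨fun p w hw => ?_, fun p w hw => ?_, fun γ α β _ hγ hγ' => ?_⟩
  · exact mem_coneUE_of_lower_triangular (hentries p) (closure_coneUE_subset hw.1) hw.2
      (by simp [hDF]) (by simp [hDF])
  · exact mul_norm_le_norm_of_mem_closedConeUE hlam' hexp.le (coneUE_subset_closedConeUE hw)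
      (by simp [hDF])
  · exact mul_diam_le_diam_image_of_derivWithin_mem_coneUE
      (differentiable_Fmap hψd hφd).continuous Fmap_apply_zero hlam' hexp.le
      (hγ.differentiableOn one_ne_zero) hγ'

/-- **Lemma 2.1.1 (existence of unstable cones, expanding case).** -/
theorem unstable_cones_expanding
    (lam mu : ℝ) (hlm : |lam| > |mu|) (hmu : |mu| > 1) (hsqrt : |lam| > Real.sqrt 2)
    (ψ : ℝ → ℝ) (hψ : ContDiff ℝ 1 ψ) (M : ℝ) (hM : ∀ x, |deriv ψ x| ≤ M)
    (a : ℝ) (ha : 0 < a) (lam' : ℝ) (hl1 : Real.sqrt 2 ≤ lam') (hl2 : lam' < |lam|) :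
    ∃ a₀ ∈ Set.Ioo (0:ℝ) a, ∃ δ₀ > (0:ℝ),
      ∀ φ : ℝ → ℝ, ContDiff ℝ 1 φ → (∀ y, |φ y| ≤ δ₀) →
        (∀ x y, |mu - ψ x * deriv φ y| ≤ |mu|) →
        -- (i) invariance of the closed cone minus the origin
        (∀ p : E2, ∀ w ∈ closure (coneUE a₀) \ {0},
            fderiv ℝ (Fmap lam mu ψ φ) p w ∈ coneUE a₀) ∧
        -- (ii) uniform expansion of cone vectors
        (∀ p : E2, ∀ w ∈ coneUE a₀,
            lam' * ‖w‖ ≤ ‖fderiv ℝ (Fmap lam mu ψ φ) p w‖) ∧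
        -- (iii) expansion of the diameter of cone-tangent curves
        (∀ (γ : ℝ → E2) (α β : ℝ), α ≤ β → ContDiffOn ℝ 1 γ (Set.Icc α β) →
            (∀ t ∈ Set.Icc α β, derivWithin γ (Set.Icc α β) t ∈ coneUE a₀) →
            lam' * Metric.diam (γ '' Set.Icc α β) ≤
              Metric.diam (Fmap lam mu ψ φ '' (γ '' Set.Icc α β))) :=
  unstable_cones_expanding_general lam mu hlm ψ hψ M hM a ha lam' hl1 hl2

end
end

section
/- Let w ∈ ℝ² ∖ {0} be an irrational direction (i.e., ℝw ∩ (ℤ² ∖ {0}) = ∅) and let w₁ ∈ ℝ² be linearly independent from w; let w^⊥ and w₁^⊥ be nonzero vectors orthogonal to w and w₁ respectively. For a > 0 and p ∈ 𝕋², set C^u_{a,w}(p) = {v = v₁w + v₂w^⊥ ∈ T_p𝕋² : |v₂| < a|v₁|} and C^s_{a,w₁}(p) = {v = v₁w₁ + v₂w₁^⊥ ∈ T_p𝕋² : |v₂| < a|v₁|}, and fix a₀ > 0 small enough that C^u_{a₀,w}(p) ∩ C^s_{a₀,w₁}(p) = ∅. Then for every ε > 0 there exist a₁ ∈ (0,a₀)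 and M > 0 such that for every C¹ curve γ in 𝕋² with γ'(t) ∈ C^u_{a₁,w}(γ(t)) for all t and length ℓ(γ) ≥ M, and every C¹ curve β with β'(t) ∈ C^s_{a₁,w₁}(β(t)) for all t and length ℓ(β) ≥ ε, the images of γ and β intersect: γ ∩ β ≠ ∅. -/
noncomputable section

/-- The flat torus `𝕋² = ℝ²/ℤ²` (as a product of two circles, with the quotient metric). -/
abbrev T2 : Type := AddCircle (1:ℝ) × AddCircle (1:ℝ)

/-- The canonical projection `ℝ² → 𝕋²`. -/
def pT : ℝ × ℝ → T2 := fun v => (↑v.1, ↑v.2)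

/-- Euclidean norm on `ℝ²`. -/
def enorm2 (v : ℝ × ℝ) : ℝ := Real.sqrt (v.1^2 + v.2^2)

/-- Euclidean dot product on `ℝ²`. -/
def dot2 (v w : ℝ × ℝ) : ℝ := v.1 * w.1 + v.2 * w.2

/-- The cone of aperture `a` around the direction `w`, with transversal `wp`:
vectors `v = v₁·w + v₂·wp` with `|v₂| < a|v₁|`. -/
def coneW (w wp : ℝ × ℝ) (a : ℝ) : Set (ℝ × ℝ) :=
  {v | ∃ v₁ v₂ : ℝ, v = v₁ • w + v₂ • wp ∧ |v₂| < a * |v₁|}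

/-- The length `ℓ(γ) = ∫_α^β |γ'(t)| dt` of a `C¹` curve on `[α,β]` (Euclidean norm). -/
def curveLength (γ : ℝ → ℝ × ℝ) (α β : ℝ) : ℝ :=
  ∫ t in α..β, enorm2 (derivWithin γ (Set.Icc α β) t)

/-!
In the coordinates `x = ⟪w, v⟫`, `y = w × v`, a curve tangent to a thin cone around `w` is the
graph `y = F x` of a `K`-Lipschitz function, `K` small, over an `x`-interval whose length grows
with the length of the curve. A curve tangent to a cone disjoint from the `a₀`-cone around `w` is
steep: it contains a piece along which `y` moves by `2ρ`, with `ρ` proportional to `ε`, while `x`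
moves by `O(ρ)`.

Irrationality of `w` gives lattice vectors `u` of arbitrarily small positive height `y u = η`.
Walking from a lattice translate of the midpoint of the steep piece along multiples of `u`, the
translate rises relative to the graph of `F` by steps between `η / 2` and `3η / 2`, so some
translate comes within `ρ / 4` of the graph. The translated steep piece then runs from one side of
the graph to the other, so by the intermediate value theorem it meets the graph; this intersection
projects to an intersection of `γ` and `β` in `𝕋²`.
-/

namespace LongConeCurves

open Set
open scoped NNReal

/-- `(dotL w v, crossL w v) = (⟪w, v⟫, w × v)` are the coordinates of `v` along and across `w`,
scaled by `|w|`; the whole argument takes place in these coordinates. -/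
def dotL (w : ℝ × ℝ) : ℝ × ℝ →L[ℝ] ℝ :=
  w.1 • ContinuousLinearMap.fst ℝ ℝ ℝ + w.2 • ContinuousLinearMap.snd ℝ ℝ ℝ

def crossL (w : ℝ × ℝ) : ℝ × ℝ →L[ℝ] ℝ :=
  w.1 • ContinuousLinearMap.snd ℝ ℝ ℝ - w.2 • ContinuousLinearMap.fst ℝ ℝ ℝ

@[simp] lemma dotL_apply (w v : ℝ × ℝ) : dotL w v = w.1 * v.1 + w.2 * v.2 := rfl

@[simp] lemma crossL_apply (w v : ℝ × ℝ) : crossL w v = w.1 * v.2 - w.2 * v.1 := rfl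

lemma dotL_self (v : ℝ × ℝ) : dotL v v = v.1 ^ 2 + v.2 ^ 2 := by
  rw [dotL_apply]; ring

lemma dotL_self_pos {w : ℝ × ℝ} (hw : w ≠ 0) : 0 < dotL w w := by
  have : w.1 ≠ 0 ∨ w.2 ≠ 0 := by
    by_contra! h
    exact hw (Prod.ext h.1 h.2)
  rw [dotL_self]
  rcases this with h | h <;> positivity

lemma sq_dotL_add_sq_crossL (w v : ℝ × ℝ) :
    dotL w v ^ 2 + crossL w v ^ 2 = dotL w w * dotL v v := by
  simp only [dotL_apply, crossL_apply]; ring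

lemma eq_of_dotL_eq_of_crossL_eq {w u v : ℝ × ℝ} (hw : w ≠ 0)
    (hdot : dotL w u = dotL w v) (hcross : crossL w u = crossL w v) : u = v := by
  have h := sq_dotL_add_sq_crossL w (u - v)
  rw [map_sub, map_sub, sub_eq_zero.mpr hdot, sub_eq_zero.mpr hcross] at h
  by_contra hne
  have := mul_pos (dotL_self_pos hw) (dotL_self_pos (sub_ne_zero.mpr hne))
  linarith

lemma enorm2_mul_le (w v : ℝ × ℝ) : enorm2 w * enorm2 v ≤ |dotL w v| + |crossL w v| := by
  rw [enorm2, enorm2, ← Real.sqrt_mul (by positivity), ← dotL_self, ← dotL_self,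
    ← sq_dotL_add_sq_crossL]
  refine Real.sqrt_le_iff.mpr ⟨by positivity, ?_⟩
  nlinarith [sq_abs (dotL w v), sq_abs (crossL w v), abs_nonneg (dotL w v),
    abs_nonneg (crossL w v)]

lemma enorm2_pos {w : ℝ × ℝ} (hw : w ≠ 0) : 0 < enorm2 w := by
  rw [enorm2, ← dotL_self]; exact Real.sqrt_pos.mpr (dotL_self_pos hw)

lemma continuous_enorm2 : Continuous enorm2 := by
  unfold enorm2; fun_prop

/-- In the coordinates `(dotL w, crossL w)` the cone `coneW w wp a` has slope
`a * coneSlope w wp`. -/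
def coneSlope (w wp : ℝ × ℝ) : ℝ := |crossL w wp| / dotL w w

section Cone

variable {w wp v : ℝ × ℝ} {a : ℝ}

lemma dotL_smul_add_smul (horth : dot2 w wp = 0) (v₁ v₂ : ℝ) :
    dotL w (v₁ • w + v₂ • wp) = v₁ * dotL w w := by
  have : dotL w wp = 0 := horth
  simp only [map_add, map_smul, this, smul_eq_mul, mul_zero, add_zero]

lemma crossL_smul_add_smul (v₁ v₂ : ℝ) :
    crossL w (v₁ • w + v₂ • wp) = v₂ * crossL w wp := by
  simp only [map_add, map_smul, smul_eq_mul, crossL_apply]; ring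

lemma crossL_ne_zero_of_orthogonal (hw : w ≠ 0) (hwp : wp ≠ 0) (horth : dot2 w wp = 0) :
    crossL w wp ≠ 0 := fun h =>
  hwp (eq_of_dotL_eq_of_crossL_eq hw (by rw [map_zero]; exact horth) (by rw [map_zero]; exact h))

lemma coneSlope_pos (hw : w ≠ 0) (hwp : wp ≠ 0) (horth : dot2 w wp = 0) : 0 < coneSlope w wp :=
  div_pos (abs_pos.mpr (crossL_ne_zero_of_orthogonal hw hwp horth)) (dotL_self_pos hw)

lemma mem_coneW_iff (hw : w ≠ 0) (hwp : wp ≠ 0) (horth : dot2 w wp = 0) :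
    v ∈ coneW w wp a ↔ |crossL w v| < a * coneSlope w wp * |dotL w v| := by
  have hww := dotL_self_pos hw
  have hκ := abs_pos.mpr (crossL_ne_zero_of_orthogonal hw hwp horth)
  constructor
  · rintro ⟨v₁, v₂, rfl, hv⟩
    rw [dotL_smul_add_smul horth, crossL_smul_add_smul, abs_mul, abs_mul, abs_of_pos hww]
    calc |v₂| * |crossL w wp| < a * |v₁| * |crossL w wp| := by gcongr
      _ = _ := by rw [coneSlope]; field_simp
  · intro hv
    refine ⟨dotL w v / dotL w w, crossL w v / crossL w wp, ?_, ?_⟩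
    · refine eq_of_dotL_eq_of_crossL_eq hw ?_ ?_
      · rw [dotL_smul_add_smul horth, div_mul_cancel₀ _ hww.ne']
      · rw [crossL_smul_add_smul, div_mul_cancel₀ _ (abs_pos.mp hκ)]
    · rw [abs_div, abs_div, abs_of_pos hww, div_lt_iff₀ hκ]
      exact hv.trans_eq (by unfold coneSlope; ring)

lemma ne_zero_of_mem_coneW (hw : w ≠ 0) (horth : dot2 w wp = 0) (hv : v ∈ coneW w wp a) :
    v ≠ 0 := by
  rintro rfl
  obtain ⟨v₁, v₂, h0, hlt⟩ := hv
  have h := congrArg (dotL w) h0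
  rw [map_zero, dotL_smul_add_smul horth, eq_comm, mul_eq_zero] at h
  rcases h with rfl | h
  · simp only [abs_zero, mul_zero] at hlt
    exact (abs_nonneg v₂).not_gt hlt
  · exact (dotL_self_pos hw).ne' h

lemma coneW_mono {a a' : ℝ} (h : a ≤ a') : coneW w wp a ⊆ coneW w wp a' := by
  rintro v ⟨v₁, v₂, rfl, hv⟩
  exact ⟨v₁, v₂, rfl, hv.trans_le (by gcongr)⟩

lemma ne_zero_and_not_mem_coneW {w1 w1p : ℝ × ℝ} {a₁ : ℝ} (hw1 : w1 ≠ 0)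
    (horth1 : dot2 w1 w1p = 0) (hdisj : coneW w wp a ∩ coneW w1 w1p a = ∅) (ha₁ : a₁ ≤ a)
    (hv : v ∈ coneW w1 w1p a₁) : v ≠ 0 ∧ v ∉ coneW w wp a :=
  ⟨ne_zero_of_mem_coneW hw1 horth1 hv,
    fun h => (eq_empty_iff_forall_notMem.mp hdisj) v ⟨h, coneW_mono ha₁ hv⟩⟩

end Cone

section Lattice

variable {w : ℝ × ℝ}

lemma exists_crossL_intCast_mem_Ioc (hw : w ≠ 0)
    (hirr : ∀ (c : ℝ) (m k : ℤ), c • w = ((m : ℝ), (k : ℝ)) → m = 0 ∧ k = 0)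
    {δ : ℝ} (hδ : 0 < δ) : ∃ m k : ℤ, crossL w ((m : ℝ), (k : ℝ)) ∈ Ioc 0 δ := by
  rcases (AddSubgroup.closure {w.1, w.2}).dense_or_cyclic with hdense | ⟨r, hr⟩
  · obtain ⟨x, hxH, hx⟩ := hdense.exists_mem_open isOpen_Ioo (nonempty_Ioo.mpr hδ)
    obtain ⟨m, n, rfl⟩ := AddSubgroup.mem_closure_pair.mp hxH
    refine ⟨-n, m, ?_, ?_⟩ <;> simp only [crossL_apply, zsmul_eq_mul, Int.cast_neg] at hx ⊢ <;>
      linarith [hx.1, hx.2]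
  · -- otherwise both coordinates of `w` are integer multiples of one real number
    have h1 : w.1 ∈ AddSubgroup.closure {w.1, w.2} := AddSubgroup.subset_closure (by simp)
    have h2 : w.2 ∈ AddSubgroup.closure {w.1, w.2} := AddSubgroup.subset_closure (by simp)
    rw [hr, AddSubgroup.mem_closure_singleton] at h1 h2
    obtain ⟨p, hp⟩ := h1
    obtain ⟨q, hq⟩ := h2
    have hw' : w = r • ((p : ℝ), (q : ℝ)) := by
      ext <;> simp [← hp, ← hq, zsmul_eq_mul, mul_comm]
    have hr0 : r ≠ 0 := by
      rintro rfl
      exact hw (by rw [hw', zero_smul])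
    obtain ⟨rfl, rfl⟩ := hirr r⁻¹ p q (by rw [hw', inv_smul_smul₀ hr0])
    exact absurd (by rw [hw', Int.cast_zero, ← Prod.zero_eq_mk, smul_zero]) hw

lemma exists_intCast_near (hw : w ≠ 0) (p : ℝ × ℝ) :
    ∃ m k : ℤ, |dotL w ((m : ℝ), (k : ℝ)) - p.1| ≤ |w.1| + |w.2| ∧
      |crossL w ((m : ℝ), (k : ℝ)) - p.2| ≤ |w.1| + |w.2| := by
  have hww : w.1 ^ 2 + w.2 ^ 2 ≠ 0 := by rw [← dotL_self]; exact (dotL_self_pos hw).ne'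
  obtain ⟨v, hv1, hv2⟩ : ∃ v : ℝ × ℝ, dotL w v = p.1 ∧ crossL w v = p.2 :=
    ⟨((p.1 * w.1 - p.2 * w.2) / dotL w w, (p.1 * w.2 + p.2 * w.1) / dotL w w),
      by simp only [dotL_apply]; field_simp; ring,
      by simp only [dotL_apply, crossL_apply]; field_simp; ring⟩
  have hr1 := abs_sub_round v.1
  have hr2 := abs_sub_round v.2
  refine ⟨round v.1, round v.2, ?_, ?_⟩
  · calc |dotL w ((round v.1 : ℝ), (round v.2 : ℝ)) - p.1|
        = |w.1 * (v.1 - round v.1) + w.2 * (v.2 - round v.2)| := by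
          rw [← hv1, ← abs_neg]; simp only [dotL_apply]; ring_nf
      _ ≤ |w.1| * |v.1 - round v.1| + |w.2| * |v.2 - round v.2| := by
          rw [← abs_mul, ← abs_mul]; exact abs_add_le _ _
      _ ≤ |w.1| + |w.2| := by nlinarith [abs_nonneg w.1, abs_nonneg w.2]
  · calc |crossL w ((round v.1 : ℝ), (round v.2 : ℝ)) - p.2|
        = |w.1 * (v.2 - round v.2) + w.2 * (round v.1 - v.1)| := by
          rw [← hv2, ← abs_neg]; simp only [crossL_apply]; ring_nf
      _ ≤ |w.1| * |v.2 - round v.2| + |w.2| * |round v.1 - v.1| := by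
          rw [← abs_mul, ← abs_mul]; exact abs_add_le _ _
      _ ≤ |w.1| + |w.2| := by
          rw [abs_sub_comm] at hr1; nlinarith [abs_nonneg w.1, abs_nonneg w.2]

lemma pT_add_intCast (v : ℝ × ℝ) (m k : ℤ) : pT (v + ((m : ℝ), (k : ℝ))) = pT v := by
  have key (x : ℝ) (n : ℤ) : ((x + n : ℝ) : AddCircle (1 : ℝ)) = x := by
    rw [AddCircle.coe_add, add_eq_left, AddCircle.coe_eq_zero_iff]
    exact ⟨n, by simp⟩
  simp only [pT, Prod.fst_add, Prod.snd_add, key]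

end Lattice

lemma exists_sign_mul_eq_abs {α : Type*} [TopologicalSpace α] {S : Set α} {f : α → ℝ}
    (hS : IsPreconnected S) (hf : ContinuousOn f S) (h0 : ∀ x ∈ S, f x ≠ 0) :
    ∃ σ : ℝ, |σ| = 1 ∧ ∀ x ∈ S, σ * f x = |f x| := by
  rcases hS.eq_or_eq_neg_of_sq_eq hf.abs hf (fun x _ => by simp [sq_abs])
      (fun hx => h0 _ hx) with h | h
  · exact ⟨1, abs_one, fun x hx => by rw [one_mul]; exact (h hx).symm⟩
  · exact ⟨-1, by simp, fun x hx => by rw [neg_one_mul]; exact (h hx).symm⟩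

lemma abs_sub_le_mul_sub_of_hasDerivWithinAt {f g f' g' : ℝ → ℝ} {a b K : ℝ}
    (hf : ∀ x ∈ Icc a b, HasDerivWithinAt f (f' x) (Icc a b) x)
    (hg : ∀ x ∈ Icc a b, HasDerivWithinAt g (g' x) (Icc a b) x)
    (hle : ∀ x ∈ Icc a b, |g' x| ≤ K * f' x) {s t : ℝ} (hs : s ∈ Icc a b) (ht : t ∈ Icc a b)
    (hst : s ≤ t) : |g t - g s| ≤ K * (f t - f s) := by
  have hmono (σ : ℝ) (hσ : |σ| = 1) : MonotoneOn (fun x => K * f x + σ * g x) (Icc a b) := by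
    have hd : ∀ x ∈ Icc a b,
        HasDerivWithinAt (fun x => K * f x + σ * g x) (K * f' x + σ * g' x) (Icc a b) x :=
      fun x hx => ((hf x hx).const_mul K).add ((hg x hx).const_mul σ)
    refine monotoneOn_of_hasDerivWithinAt_nonneg (f' := fun x => K * f' x + σ * g' x)
      (convex_Icc a b)
      (fun x hx => (hd x hx).continuousWithinAt) (fun x hx => ?_) (fun x hx => ?_)
    · rw [interior_Icc] at hx ⊢
      exact (hd x (Ioo_subset_Icc_self hx)).mono Ioo_subset_Icc_self
    · rw [interior_Icc] at hx
      have h := hle x (Ioo_subset_Icc_self hx)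
      have : |σ * g' x| = |g' x| := by rw [abs_mul, hσ, one_mul]
      linarith [neg_abs_le (σ * g' x)]
  have h₁ := hmono 1 abs_one hs ht hst
  have h₂ := hmono (-1) (by simp) hs ht hst
  simp only at h₁ h₂
  rw [abs_le]
  constructor <;> linarith

lemma exists_abs_le_of_sub_le_succ {ψ : ℕ → ℝ} {δ : ℝ} {J : ℕ} (h₀ : -δ ≤ ψ 0) (hJ : ψ J ≤ δ)
    (hstep : ∀ j < J, ψ j - 2 * δ ≤ ψ (j + 1)) : ∃ j ≤ J, |ψ j| ≤ δ := by
  classical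
  have hex : ∃ j, ψ j ≤ δ := ⟨J, hJ⟩
  have hle := Nat.find_min' hex hJ
  refine ⟨Nat.find hex, hle, abs_le.mpr ⟨?_, Nat.find_spec hex⟩⟩
  rcases h : Nat.find hex with _ | j
  · exact h₀
  · have hprev : δ < ψ j := not_le.mp (Nat.find_min hex (by omega))
    linarith [hstep j (by omega)]

lemma exists_abs_sub_le_of_steps {F : ℝ → ℝ} {ξ₀ y₀ s η δ : ℝ} {J : ℕ} (hη : 0 < η)
    (hηδ : η ≤ δ) (hstep : ∀ j < J, |F (ξ₀ + (j + 1) * s) - F (ξ₀ + j * s)| ≤ η / 2)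
    (h₀ : y₀ ≤ F ξ₀) (hJ : F ξ₀ - y₀ ≤ J * (η / 2)) :
    ∃ j ≤ J, |F (ξ₀ + j * s) - (y₀ + j * η)| ≤ δ := by
  set ψ : ℕ → ℝ := fun j => F (ξ₀ + j * s) - (y₀ + j * η)
  have hψstep (j : ℕ) (hj : j < J) : ψ (j + 1) ≤ ψ j - η / 2 ∧ ψ j - 2 * δ ≤ ψ (j + 1) := by
    have h := abs_le.mp (hstep j hj)
    simp only [ψ, Nat.cast_succ]
    constructor <;> linarith [h.1, h.2]
  have hψJ : ∀ j ≤ J, ψ j ≤ ψ 0 - j * (η / 2) := by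
    intro j hj
    induction j with
    | zero => simp
    | succ j ih =>
      have := (hψstep j hj).1
      push_cast
      linarith [ih (by omega)]
  have hψ0 : ψ 0 = F ξ₀ - y₀ := by simp [ψ]
  exact exists_abs_le_of_sub_le_succ (by linarith) (by linarith [hψJ J le_rfl])
    (fun j hj => (hψstep j hj).2)

lemma exists_lipschitzOnWith_graph {f g : ℝ → ℝ} {a b : ℝ} {K : ℝ≥0} (hab : a ≤ b)
    (hf : ContinuousOn f (Icc a b))
    (hfg : ∀ s ∈ Icc a b, ∀ t ∈ Icc a b, |g t - g s| ≤ K * |f t - f s|) :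
    ∃ F : ℝ → ℝ, LipschitzOnWith K F (uIcc (f a) (f b)) ∧
      ∀ ξ ∈ uIcc (f a) (f b), ∃ s ∈ Icc a b, f s = ξ ∧ g s = F ξ := by
  have hsurj : ∀ ξ ∈ uIcc (f a) (f b), ∃ s ∈ Icc a b, f s = ξ := by
    intro ξ hξ
    rw [← uIcc_of_le hab]
    exact intermediate_value_uIcc (by rwa [uIcc_of_le hab]) hξ
  choose! S hS hfS using hsurj
  refine ⟨fun ξ => g (S ξ), LipschitzOnWith.of_dist_le_mul fun ξ hξ ξ' hξ' => ?_,
    fun ξ hξ => ⟨S ξ, hS ξ hξ, hfS ξ hξ, rfl⟩⟩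
  rw [Real.dist_eq, Real.dist_eq]
  simpa only [hfS ξ hξ, hfS ξ' hξ'] using hfg _ (hS ξ' hξ') _ (hS ξ hξ)

lemma exists_eq_of_lipschitzOnWith {F x y : ℝ → ℝ} {c d x₀ r ρ : ℝ} {K : ℝ≥0} (hcd : c ≤ d)
    (hx : ContinuousOn x (Icc c d)) (hy : ContinuousOn y (Icc c d))
    (hF : LipschitzOnWith K F (Icc (x₀ - r) (x₀ + r)))
    (hxr : ∀ t ∈ Icc c d, |x t - x₀| ≤ r) (hKr : K * r ≤ ρ / 4)
    (hF₀ : |F x₀ - (y c + y d) / 2| ≤ ρ / 4) (hρ : 2 * ρ ≤ |y d - y c|) :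
    ∃ t ∈ Icc c d, F (x t) = y t := by
  have hmaps : MapsTo x (Icc c d) (Icc (x₀ - r) (x₀ + r)) := fun t ht => by
    have := abs_le.mp (hxr t ht); constructor <;> linarith
  have hFb : ∀ t ∈ Icc c d, |F (x t) - F x₀| ≤ ρ / 4 := fun t ht => by
    have hr : 0 ≤ r := (abs_nonneg _).trans (hxr t ht)
    have h := hF.dist_le_mul _ (hmaps ht) x₀ (by constructor <;> linarith)
    rw [Real.dist_eq, Real.dist_eq] at h
    nlinarith [hxr t ht, K.coe_nonneg]
  have hc := abs_le.mp (hFb c (left_mem_Icc.mpr hcd))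
  have hd := abs_le.mp (hFb d (right_mem_Icc.mpr hcd))
  have h₀ := abs_le.mp hF₀
  have hω : ContinuousOn (fun t => F (x t) - y t) (uIcc c d) := by
    rw [uIcc_of_le hcd]; exact (hF.continuousOn.comp hx hmaps).sub hy
  -- `F ∘ x` stays within `ρ / 2` of the mean of `y c` and `y d`, which are `2ρ` or more apart
  have hzero : (0 : ℝ) ∈ uIcc (F (x c) - y c) (F (x d) - y d) := by
    rcases le_total (y c) (y d) with h | h
    · rw [abs_of_nonneg (sub_nonneg.mpr h)] at hρ
      exact mem_uIcc.mpr (Or.inr ⟨by linarith, by linarith⟩)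
    · rw [abs_of_nonpos (sub_nonpos.mpr h)] at hρ
      exact mem_uIcc.mpr (Or.inl ⟨by linarith, by linarith⟩)
  obtain ⟨t, ht, h⟩ := intermediate_value_uIcc hω hzero
  rw [uIcc_of_le hcd] at ht
  exact ⟨t, ht, sub_eq_zero.mp h⟩

section C1Curve

variable {θ : ℝ → ℝ × ℝ} {a b : ℝ}

lemma hasDerivWithinAt_clm_comp (hθ : ContDiffOn ℝ 1 θ (Icc a b)) (P : ℝ × ℝ →L[ℝ] ℝ) :
    ∀ t ∈ Icc a b,
      HasDerivWithinAt (fun s => P (θ s)) (P (derivWithin θ (Icc a b) t)) (Icc a b) t :=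
  fun t ht =>
    P.hasFDerivAt.comp_hasDerivWithinAt t ((hθ.differentiableOn one_ne_zero t ht).hasDerivWithinAt)

lemma continuousOn_clm_derivWithin (hab : a < b) (hθ : ContDiffOn ℝ 1 θ (Icc a b))
    (P : ℝ × ℝ →L[ℝ] ℝ) : ContinuousOn (fun t => P (derivWithin θ (Icc a b) t)) (Icc a b) :=
  P.continuous.comp_continuousOn (hθ.continuousOn_derivWithin (uniqueDiffOn_Icc hab) le_rfl)

lemma monotoneOn_clm_comp (hθ : ContDiffOn ℝ 1 θ (Icc a b)) (P : ℝ × ℝ →L[ℝ] ℝ)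
    (hP : ∀ t ∈ Icc a b, 0 ≤ P (derivWithin θ (Icc a b) t)) :
    MonotoneOn (fun t => P (θ t)) (Icc a b) := by
  intro s hs t ht hst
  have h := abs_sub_le_mul_sub_of_hasDerivWithinAt (hasDerivWithinAt_clm_comp hθ P)
    (g := fun _ => (0 : ℝ)) (fun x _ => hasDerivWithinAt_const x _ 0) (K := 1)
    (fun x hx => by simpa using hP x hx) hs ht hst
  simpa using h

lemma abs_sub_le_mul_sub_of_clm (hθ : ContDiffOn ℝ 1 θ (Icc a b)) (P Q : ℝ × ℝ →L[ℝ] ℝ)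
    {K : ℝ}
    (hQ : ∀ t ∈ Icc a b, |Q (derivWithin θ (Icc a b) t)| ≤ K * P (derivWithin θ (Icc a b) t))
    {s t : ℝ} (hs : s ∈ Icc a b) (ht : t ∈ Icc a b) (hst : s ≤ t) :
    |Q (θ t) - Q (θ s)| ≤ K * (P (θ t) - P (θ s)) :=
  abs_sub_le_mul_sub_of_hasDerivWithinAt (hasDerivWithinAt_clm_comp hθ P)
    (hasDerivWithinAt_clm_comp hθ Q) hQ hs ht hst

lemma curveLength_le_mul_sub (hab : a < b) (hθ : ContDiffOn ℝ 1 θ (Icc a b))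
    (P : ℝ × ℝ →L[ℝ] ℝ) {C : ℝ}
    (hC : ∀ t ∈ Icc a b, enorm2 (derivWithin θ (Icc a b) t) ≤ C * P (derivWithin θ (Icc a b) t)) :
    curveLength θ a b ≤ C * (P (θ b) - P (θ a)) := by
  have hD := hθ.continuousOn_derivWithin (uniqueDiffOn_Icc hab) le_rfl
  have hDint : IntervalIntegrable (derivWithin θ (Icc a b)) MeasureTheory.volume a b :=
    hD.intervalIntegrable_of_Icc hab.le
  calc curveLength θ a b ≤ ∫ t in a..b, C * P (derivWithin θ (Icc a b) t) := by
        refine intervalIntegral.integral_mono_on hab.le ?_ ?_ hC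
        · exact (continuous_enorm2.comp_continuousOn hD).intervalIntegrable_of_Icc hab.le
        · exact (continuousOn_const.mul (continuousOn_clm_derivWithin hab hθ P))
            |>.intervalIntegrable_of_Icc hab.le
    _ = C * (P (θ b) - P (θ a)) := by
        rw [intervalIntegral.integral_const_mul, P.intervalIntegral_comp_comm hDint,
          intervalIntegral.integral_derivWithin_Icc_of_contDiffOn_Icc hθ hab.le, map_sub]

lemma exists_orientation_of_abs_le_mul_abs (hab : a < b)
    (hθ : ContDiffOn ℝ 1 θ (Icc a b)) (P Q : ℝ × ℝ →L[ℝ] ℝ) {K N : ℝ}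
    (hN : 0 < N) (hP : ∀ t ∈ Icc a b, P (derivWithin θ (Icc a b) t) ≠ 0)
    (hQ : ∀ t ∈ Icc a b,
      |Q (derivWithin θ (Icc a b) t)| ≤ K * |P (derivWithin θ (Icc a b) t)|)
    (hnorm : ∀ v, N * enorm2 v ≤ |P v| + |Q v|) :
    ∃ σ : ℝ, |σ| = 1 ∧ MonotoneOn (fun t => σ * P (θ t)) (Icc a b) ∧
      (∀ s ∈ Icc a b, ∀ t ∈ Icc a b, s ≤ t →
        |Q (θ t) - Q (θ s)| ≤ K * (σ * P (θ t) - σ * P (θ s))) ∧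
      N * curveLength θ a b ≤ (1 + K) * (σ * P (θ b) - σ * P (θ a)) := by
  obtain ⟨σ, hσ, hσP⟩ := exists_sign_mul_eq_abs isPreconnected_Icc
    (continuousOn_clm_derivWithin hab hθ P) hP
  have hσP' : ∀ t ∈ Icc a b,
      (σ • P) (derivWithin θ (Icc a b) t) = |P (derivWithin θ (Icc a b) t)| := hσP
  refine ⟨σ, hσ, monotoneOn_clm_comp hθ (σ • P) fun t ht => (hσP' t ht).symm ▸ abs_nonneg _,
    fun s hs t ht hst => ?_, ?_⟩
  · exact abs_sub_le_mul_sub_of_clm hθ (σ • P) Q (fun t ht => (hσP' t ht).symm ▸ hQ t ht) hs ht hst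
  · rw [← le_div_iff₀' hN, mul_div_right_comm]
    refine curveLength_le_mul_sub hab hθ (σ • P) fun t ht => ?_
    rw [hσP' t ht, div_mul_eq_mul_div, le_div_iff₀' hN]
    linarith [hnorm (derivWithin θ (Icc a b) t), hQ t ht]

lemma lt_of_pos_le_curveLength {M : ℝ} (hab : a ≤ b) (hM : 0 < M)
    (h : M ≤ curveLength θ a b) : a < b :=
  hab.lt_of_ne <| by
    rintro rfl
    simp only [curveLength, intervalIntegral.integral_same] at h
    linarith

end C1Curve

lemma exists_lattice_translate_near_graph {w : ℝ × ℝ} (hw : w ≠ 0)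
    (hirr : ∀ (c : ℝ) (m k : ℤ), c • w = ((m : ℝ), (k : ℝ)) → m = 0 ∧ k = 0)
    {δ Δ A : ℝ} (hδ : 0 < δ) (hΔ : 0 ≤ Δ) (hA : 0 < A) :
    ∃ K : ℝ≥0, 0 < K ∧ (K : ℝ) ≤ A ∧ ∃ L > 0, ∀ (F : ℝ → ℝ) (X₁ X₂ : ℝ), L ≤ |X₂ - X₁| →
      LipschitzOnWith K F (uIcc X₁ X₂) → ∀ p : ℝ × ℝ, ∃ m k : ℤ,
        Icc (p.1 + dotL w ((m : ℝ), (k : ℝ)) - Δ) (p.1 + dotL w ((m : ℝ), (k : ℝ)) + Δ)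
          ⊆ uIcc X₁ X₂ ∧
        |F (p.1 + dotL w ((m : ℝ), (k : ℝ))) - (p.2 + crossL w ((m : ℝ), (k : ℝ)))| ≤ δ := by
  obtain ⟨mu, ku, hη, hηδ⟩ := exists_crossL_intCast_mem_Ioc hw hirr hδ
  set η := crossL w ((mu : ℝ), (ku : ℝ))
  set s := dotL w ((mu : ℝ), (ku : ℝ))
  set R := |w.1| + |w.2|
  have hR : 0 < R := by
    by_contra! h
    exact hw (Prod.ext (abs_nonpos_iff.mp (by linarith [abs_nonneg w.2]))
      (abs_nonpos_iff.mp (by linarith [abs_nonneg w.1])))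
  obtain ⟨K, hK⟩ : ∃ K : ℝ≥0, (K : ℝ) = min A (η / (2 * (|s| + 1))) :=
    ⟨⟨_, by positivity⟩, rfl⟩
  have hKs : K * |s| ≤ η / 2 := by
    calc K * |s| ≤ η / (2 * (|s| + 1)) * (|s| + 1) := by
          rw [hK]; gcongr; exact min_le_right _ _; linarith
      _ = η / 2 := by field_simp
  set J := ⌈4 * (1 + A) * R / η⌉₊
  have hJ : 2 * (1 + A) * R ≤ J * (η / 2) := by
    have := Nat.le_ceil (4 * (1 + A) * R / η)
    rw [div_le_iff₀ hη] at this
    linarith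
  refine ⟨K, by rw [← NNReal.coe_pos, hK]; positivity, hK ▸ min_le_left _ _,
    2 * (Δ + R + J * |s|), by positivity, fun F X₁ X₂ hL hF p => ?_⟩
  rw [uIcc] at hF ⊢
  rw [abs_sub_comm, ← max_sub_min_eq_abs'] at hL
  set lo := X₁ ⊓ X₂
  set hi := X₁ ⊔ X₂
  -- The walk through `p + (m₀ + j mu, k₀ + j ku)`, `j ≤ J`, starts near `ξc` at most
  -- `2 (1 + A) R` below the graph, rises by about `η` per step and stays over `[lo + Δ, hi - Δ]`.
  set ξc := lo + Δ + R + J * |s| with hξc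
  have hJs : 0 ≤ (J : ℝ) * |s| := by positivity
  have hξcmem : ξc ∈ Icc lo hi := ⟨by linarith, by linarith⟩
  obtain ⟨m₀, k₀, hx₀, hy₀⟩ : ∃ m k : ℤ, |dotL w ((m : ℝ), (k : ℝ)) - (ξc - p.1)| ≤ R ∧
      |crossL w ((m : ℝ), (k : ℝ)) - (F ξc - (1 + A) * R - p.2)| ≤ R :=
    exists_intCast_near hw (ξc - p.1, F ξc - (1 + A) * R - p.2)
  set ξ₀ := p.1 + dotL w ((m₀ : ℝ), (k₀ : ℝ))
  set y₀ := p.2 + crossL w ((m₀ : ℝ), (k₀ : ℝ))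
  have hx₀' := abs_le.mp hx₀
  have hy₀' := abs_le.mp hy₀
  have hsub : ∀ j ≤ J, Icc (ξ₀ + j * s - Δ) (ξ₀ + j * s + Δ) ⊆ Icc lo hi := by
    intro j hj
    have hjs : |j * s| ≤ J * |s| := by
      rw [abs_mul, Nat.abs_cast]; gcongr
    have := abs_le.mp hjs
    exact Icc_subset_Icc (by linarith) (by linarith)
  have hmem : ∀ j ≤ J, ξ₀ + j * s ∈ Icc lo hi := fun j hj =>
    hsub j hj ⟨by linarith, by linarith⟩
  have hFlip : ∀ j ≤ J, |F (ξ₀ + j * s) - F ξc| ≤ K * |ξ₀ + j * s - ξc| := fun j hj => by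
    simpa only [Real.dist_eq] using hF.dist_le_mul _ (hmem j hj) ξc
      hξcmem
  have hF₀ := abs_le.mp (by simpa using hFlip 0 (Nat.zero_le J))
  have hKR : K * |ξ₀ - ξc| ≤ A * R := by
    rw [hK]; gcongr
    · exact min_le_left _ _
    · exact abs_le.mpr ⟨by linarith, by linarith⟩
  obtain ⟨j, hj, hnear⟩ := exists_abs_sub_le_of_steps (F := F) (ξ₀ := ξ₀) (y₀ := y₀) (s := s)
    hη hηδ (fun j hj => by
      have h := hF.dist_le_mul _ (hmem (j + 1) hj) _ (hmem j hj.le)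
      rw [Real.dist_eq, Real.dist_eq] at h
      push_cast at h
      calc _ ≤ K * |ξ₀ + (j + 1) * s - (ξ₀ + j * s)| := h
        _ = K * |s| := by ring_nf
        _ ≤ η / 2 := hKs)
    (by linarith) (by linarith)
  have hx : dotL w (((m₀ + j * mu : ℤ) : ℝ), ((k₀ + j * ku : ℤ) : ℝ)) =
      dotL w ((m₀ : ℝ), (k₀ : ℝ)) + j * s := by simp only [s, dotL_apply]; push_cast; ring
  have hy : crossL w (((m₀ + j * mu : ℤ) : ℝ), ((k₀ + j * ku : ℤ) : ℝ)) =
      crossL w ((m₀ : ℝ), (k₀ : ℝ)) + j * η := by simp only [η, crossL_apply]; push_cast; ring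
  refine ⟨m₀ + j * mu, k₀ + j * ku, ?_, ?_⟩
  · rw [hx, ← add_assoc]; exact hsub j hj
  · rw [hx, hy, ← add_assoc, ← add_assoc]; exact hnear

section TransversalCurves

variable {w wp : ℝ × ℝ}

lemma exists_lipschitzOnWith_graph_of_mem_coneW (hw : w ≠ 0) (hwp : wp ≠ 0)
    (horth : dot2 w wp = 0) {γ : ℝ → ℝ × ℝ} {α β' : ℝ} {K : ℝ≥0} (hαβ : α < β')
    (hγ : ContDiffOn ℝ 1 γ (Icc α β'))
    (hcone : ∀ t ∈ Icc α β', derivWithin γ (Icc α β') t ∈ coneW w wp (K / coneSlope w wp)) :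
    ∃ F : ℝ → ℝ, LipschitzOnWith K F (uIcc (dotL w (γ α)) (dotL w (γ β'))) ∧
      (∀ ξ ∈ uIcc (dotL w (γ α)) (dotL w (γ β')),
        ∃ s ∈ Icc α β', dotL w (γ s) = ξ ∧ crossL w (γ s) = F ξ) ∧
      enorm2 w * curveLength γ α β' ≤ (1 + K) * |dotL w (γ β') - dotL w (γ α)| := by
  set D := derivWithin γ (Icc α β')
  have hD (t : ℝ) (ht : t ∈ Icc α β') : |crossL w (D t)| < K * |dotL w (D t)| := by
    have := (mem_coneW_iff hw hwp horth).mp (hcone t ht)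
    rwa [div_mul_cancel₀ _ (coneSlope_pos hw hwp horth).ne'] at this
  have hP (t : ℝ) (ht : t ∈ Icc α β') : dotL w (D t) ≠ 0 := fun h => by
    have := hD t ht
    rw [h, abs_zero, mul_zero] at this
    exact (abs_nonneg _).not_gt this
  obtain ⟨σ, hσ, -, hcmp, hlen⟩ := exists_orientation_of_abs_le_mul_abs hαβ hγ (dotL w)
    (crossL w) (enorm2_pos hw) hP (fun t ht => (hD t ht).le) (enorm2_mul_le w)
  have hσ_le (x y : ℝ) : σ * x - σ * y ≤ |x - y| := by
    rw [← mul_sub]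
    exact (le_abs_self _).trans_eq (by rw [abs_mul, hσ, one_mul])
  have hlip (s : ℝ) (hs : s ∈ Icc α β') (t : ℝ) (ht : t ∈ Icc α β') :
      |crossL w (γ t) - crossL w (γ s)| ≤ K * |dotL w (γ t) - dotL w (γ s)| := by
    rcases le_total s t with hst | hts
    · exact (hcmp s hs t ht hst).trans (by gcongr; exact hσ_le _ _)
    · rw [abs_sub_comm, abs_sub_comm (dotL w (γ t))]
      exact (hcmp t ht s hs hts).trans (by gcongr; exact hσ_le _ _)
  obtain ⟨F, hF, hFγ⟩ := exists_lipschitzOnWith_graph hαβ.le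
    ((dotL w).continuous.comp_continuousOn hγ.continuousOn) hlip
  exact ⟨F, hF, hFγ, hlen.trans (by gcongr; exact hσ_le _ _)⟩

lemma exists_crossL_span_of_not_mem_coneW (hw : w ≠ 0) (hwp : wp ≠ 0) (horth : dot2 w wp = 0)
    {β : ℝ → ℝ × ℝ} {c d a ρ : ℝ} (ha : 0 < a) (hρ : 0 ≤ ρ) (hcd : c < d)
    (hβ : ContDiffOn ℝ 1 β (Icc c d))
    (hcone : ∀ t ∈ Icc c d,
      derivWithin β (Icc c d) t ≠ 0 ∧ derivWithin β (Icc c d) t ∉ coneW w wp a)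
    (hlen : (1 + (a * coneSlope w wp)⁻¹) * (2 * ρ) ≤ enorm2 w * curveLength β c d) :
    ∃ d' ∈ Icc c d, |crossL w (β d') - crossL w (β c)| = 2 * ρ ∧
      ∀ t ∈ Icc c d', |dotL w (β t) - dotL w (β c)| ≤ 2 * ρ / (a * coneSlope w wp) := by
  set A := a * coneSlope w wp
  have hA : 0 < A := mul_pos ha (coneSlope_pos hw hwp horth)
  set D := derivWithin β (Icc c d)
  have hD (t : ℝ) (ht : t ∈ Icc c d) : |dotL w (D t)| ≤ A⁻¹ * |crossL w (D t)| := by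
    have := (hcone t ht).2
    rw [mem_coneW_iff hw hwp horth, not_lt] at this
    rwa [inv_mul_eq_div, le_div_iff₀' hA]
  have hP (t : ℝ) (ht : t ∈ Icc c d) : crossL w (D t) ≠ 0 := fun h => by
    have := hD t ht
    rw [h, abs_zero, mul_zero, abs_nonpos_iff] at this
    exact (hcone t ht).1 (eq_of_dotL_eq_of_crossL_eq hw (by rw [this, map_zero])
      (by rw [h, map_zero]))
  obtain ⟨σ, hσ, hmono, hcmp, hlen'⟩ := exists_orientation_of_abs_le_mul_abs hcd hβ (crossL w)
    (dotL w) (enorm2_pos hw) hP hD fun v => (enorm2_mul_le w v).trans_eq (add_comm _ _)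
  set f := fun t => σ * crossL w (β t)
  have hspan : 2 * ρ ≤ f d - f c := le_of_mul_le_mul_left (hlen.trans hlen') (by positivity)
  have hf : ContinuousOn f (Icc c d) :=
    continuousOn_const.mul ((crossL w).continuous.comp_continuousOn hβ.continuousOn)
  obtain ⟨d', hd', hfd'⟩ := intermediate_value_Icc hcd.le hf
    (⟨by linarith, by linarith⟩ : f c + 2 * ρ ∈ Icc (f c) (f d))
  refine ⟨d', hd', ?_, fun t ht => ?_⟩
  · calc |crossL w (β d') - crossL w (β c)| = |f d' - f c| := by
          simp only [f]; rw [← mul_sub, abs_mul, hσ, one_mul]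
      _ = 2 * ρ := by rw [hfd', add_sub_cancel_left, abs_of_nonneg (by positivity)]
  · have htd : t ∈ Icc c d := ⟨ht.1, ht.2.trans hd'.2⟩
    calc |dotL w (β t) - dotL w (β c)| ≤ A⁻¹ * (f t - f c) :=
          hcmp c (left_mem_Icc.mpr hcd.le) t htd ht.1
      _ ≤ A⁻¹ * (f d' - f c) := by gcongr; exact hmono htd hd' ht.2
      _ = 2 * ρ / A := by rw [hfd']; ring

end TransversalCurves

lemma exists_pT_eq_of_near_graph {w : ℝ × ℝ} (hw : w ≠ 0) {γ β : ℝ → ℝ × ℝ} {α β' c d r ρ : ℝ}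
    {F : ℝ → ℝ} {K : ℝ≥0} {I : Set ℝ} {m k : ℤ}
    (hFγ : ∀ ξ ∈ I, ∃ s ∈ Icc α β', dotL w (γ s) = ξ ∧ crossL w (γ s) = F ξ)
    (hF : LipschitzOnWith K F I) (hcd : c ≤ d) (hβ : ContinuousOn β (Icc c d))
    (hspan : 2 * ρ ≤ |crossL w (β d) - crossL w (β c)|)
    (hdev : ∀ t ∈ Icc c d, |dotL w (β t) - dotL w (β c)| ≤ r) (hKr : K * r ≤ ρ / 4)
    (hsub : Icc (dotL w (β c) + dotL w ((m : ℝ), (k : ℝ)) - r)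
      (dotL w (β c) + dotL w ((m : ℝ), (k : ℝ)) + r) ⊆ I)
    (hnear : |F (dotL w (β c) + dotL w ((m : ℝ), (k : ℝ))) -
      ((crossL w (β c) + crossL w (β d)) / 2 + crossL w ((m : ℝ), (k : ℝ)))| ≤ ρ / 4) :
    ∃ s ∈ Icc α β', ∃ t ∈ Icc c d, pT (γ s) = pT (β t) := by
  set n : ℝ × ℝ := ((m : ℝ), (k : ℝ))
  have hdev' (t : ℝ) (ht : t ∈ Icc c d) :
      |dotL w (β t) + dotL w n - (dotL w (β c) + dotL w n)| ≤ r := by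
    simpa using hdev t ht
  obtain ⟨t, ht, hcross⟩ := exists_eq_of_lipschitzOnWith (x := fun t => dotL w (β t) + dotL w n)
    (y := fun t => crossL w (β t) + crossL w n) hcd
    (((dotL w).continuous.comp_continuousOn hβ).add continuousOn_const)
    (((crossL w).continuous.comp_continuousOn hβ).add continuousOn_const)
    (hF.mono hsub) hdev' hKr (by convert hnear using 3; ring)
    (by simp only [add_sub_add_right_eq_sub]; exact hspan)
  have := abs_le.mp (hdev' t ht)
  obtain ⟨s, hs, hxs, hys⟩ := hFγ (dotL w (β t) + dotL w n) (hsub ⟨by linarith, by linarith⟩)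
  refine ⟨s, hs, t, ht, ?_⟩
  rw [eq_of_dotL_eq_of_crossL_eq hw (u := γ s) (v := β t + n) (by rw [map_add]; exact hxs)
    (by rw [map_add, hys, ← hcross]), pT_add_intCast]

end LongConeCurves

open LongConeCurves Set in
theorem long_cone_curves_intersect_general
    (w w1 wp w1p : ℝ × ℝ) (hw : w ≠ 0)
    -- `w` is an irrational direction : `ℝw ∩ (ℤ² ∖ {0}) = ∅`
    (hirr : ∀ (c : ℝ) (m k : ℤ), c • w = ((m : ℝ), (k : ℝ)) → m = 0 ∧ k = 0)
    -- `w₁` is linearly independent from `w`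
    (hindep : ∀ s t : ℝ, s • w + t • w1 = 0 → s = 0 ∧ t = 0)
    -- `w^⊥`, `w₁^⊥` are nonzero orthogonal vectors to `w`, `w₁`
    (hwp : wp ≠ 0) (horth : dot2 w wp = 0) (horth1 : dot2 w1 w1p = 0)
    -- `a₀ > 0` is small enough that the two cones are disjoint
    (a₀ : ℝ) (ha₀ : 0 < a₀) (hdisj : coneW w wp a₀ ∩ coneW w1 w1p a₀ = ∅)
    (ε : ℝ) (hε : 0 < ε) :
    ∃ a₁ ∈ Set.Ioo (0:ℝ) a₀, ∃ M > (0:ℝ),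
      ∀ (γ : ℝ → ℝ × ℝ) (α β' : ℝ), α ≤ β' → ContDiffOn ℝ 1 γ (Set.Icc α β') →
        (∀ t ∈ Set.Icc α β', derivWithin γ (Set.Icc α β') t ∈ coneW w wp a₁) →
        M ≤ curveLength γ α β' →
        ∀ (β : ℝ → ℝ × ℝ) (c d : ℝ), c ≤ d → ContDiffOn ℝ 1 β (Set.Icc c d) →
          (∀ t ∈ Set.Icc c d, derivWithin β (Set.Icc c d) t ∈ coneW w1 w1p a₁) →
          ε ≤ curveLength β c d →
          ∃ s ∈ Set.Icc α β', ∃ t ∈ Set.Icc c d, pT (γ s) = pT (β t) := by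
  have hw1 : w1 ≠ 0 := fun h => one_ne_zero (hindep 0 1 (by simp [h])).2
  have hN := enorm2_pos hw
  have hκ := coneSlope_pos hw hwp horth
  set A₀ := a₀ * coneSlope w wp
  have hA₀ : 0 < A₀ := mul_pos ha₀ hκ
  set ρ := enorm2 w * ε / (2 * (1 + A₀⁻¹))
  have hρ : 0 < ρ := by positivity
  obtain ⟨K, hK, hKA, L, hL, hdense⟩ := exists_lattice_translate_near_graph hw hirr
    (δ := ρ / 4) (Δ := 2 * ρ / A₀) (A := A₀ / 8) (by positivity) (by positivity) (by positivity)
  have ha₁ : K / coneSlope w wp < a₀ := (div_lt_iff₀ hκ).mpr (by linarith)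
  refine ⟨K / coneSlope w wp, ⟨by positivity, ha₁⟩, (1 + K) * L / enorm2 w, by positivity, ?_⟩
  intro γ α β' hαβ hγ hγcone hγlen β c d hcd hβ hβcone hβlen
  obtain ⟨F, hF, hFγ, hγlen'⟩ := exists_lipschitzOnWith_graph_of_mem_coneW hw hwp horth
    (lt_of_pos_le_curveLength hαβ (by positivity) hγlen) hγ hγcone
  obtain ⟨d', hd', hspan, hdev⟩ := exists_crossL_span_of_not_mem_coneW hw hwp horth ha₀ hρ.le
    (lt_of_pos_le_curveLength hcd hε hβlen) hβ
    (fun t ht => ne_zero_and_not_mem_coneW hw1 horth1 hdisj ha₁.le (hβcone t ht))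
    (by rw [show (1 + A₀⁻¹) * (2 * ρ) = enorm2 w * ε by simp only [ρ]; field_simp]; gcongr)
  obtain ⟨m, k, hsub, hnear⟩ := hdense F _ _
    (le_of_mul_le_mul_left (((div_le_iff₀' hN).mp hγlen).trans hγlen') (by positivity)) hF
    (dotL w (β c), (crossL w (β c) + crossL w (β d')) / 2)
  obtain ⟨s, hs, t, ht, hst⟩ := exists_pT_eq_of_near_graph hw hFγ hF hd'.1
    (hβ.continuousOn.mono (Icc_subset_Icc_right hd'.2)) hspan.ge hdev
    (calc (K : ℝ) * (2 * ρ / A₀) ≤ A₀ / 8 * (2 * ρ / A₀) := by gcongr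
      _ = ρ / 4 := by field_simp; ring) hsub hnear
  exact ⟨s, hs, t, ⟨ht.1, ht.2.trans hd'.2⟩, hst⟩

/-- **Lemma 2.3.1.** Cone-tangent curves around an irrational direction `w` of length at
least `M` intersect every curve of length at least `ε` tangent to a transversal cone. -/
theorem long_cone_curves_intersect
    (w w1 wp w1p : ℝ × ℝ) (hw : w ≠ 0)
    -- `w` is an irrational direction : `ℝw ∩ (ℤ² ∖ {0}) = ∅`
    (hirr : ∀ (c : ℝ) (m k : ℤ), c • w = ((m : ℝ), (k : ℝ)) → m = 0 ∧ k = 0)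
    -- `w₁` is linearly independent from `w`
    (hindep : ∀ s t : ℝ, s • w + t • w1 = 0 → s = 0 ∧ t = 0)
    -- `w^⊥`, `w₁^⊥` are nonzero orthogonal vectors to `w`, `w₁`
    (hwp : wp ≠ 0) (hw1p : w1p ≠ 0) (horth : dot2 w wp = 0) (horth1 : dot2 w1 w1p = 0)
    -- `a₀ > 0` is small enough that the two cones are disjoint
    (a₀ : ℝ) (ha₀ : 0 < a₀) (hdisj : coneW w wp a₀ ∩ coneW w1 w1p a₀ = ∅)
    (ε : ℝ) (hε : 0 < ε) :
    ∃ a₁ ∈ Set.Ioo (0:ℝ) a₀, ∃ M > (0:ℝ),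
      ∀ (γ : ℝ → ℝ × ℝ) (α β' : ℝ), α ≤ β' → ContDiffOn ℝ 1 γ (Set.Icc α β') →
        (∀ t ∈ Set.Icc α β', derivWithin γ (Set.Icc α β') t ∈ coneW w wp a₁) →
        M ≤ curveLength γ α β' →
        ∀ (β : ℝ → ℝ × ℝ) (c d : ℝ), c ≤ d → ContDiffOn ℝ 1 β (Set.Icc c d) →
          (∀ t ∈ Set.Icc c d, derivWithin β (Set.Icc c d) t ∈ coneW w1 w1p a₁) →
          ε ≤ curveLength β c d →
          ∃ s ∈ Set.Icc α β', ∃ t ∈ Set.Icc c d, pT (γ s) = pT (β t) :=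
  long_cone_curves_intersect_general w w1 wp w1p hw hirr hindep hwp horth horth1 a₀ ha₀ hdisj ε hε
end
end
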